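/- arXiv:1403.5115 — 3 statements merged into one kernel-verified Lean document; each statement's English description precedes it below -/
import Mathlib

section
/- (Multiclass Perceptron mistake bound) Let (x_1, y_1), ..., be a sequence of examples in ℝ^d × Fin Q with ‖x_i‖ ≤ 1, and suppose there exists W* = (w*_1,...,w*_Q) with Σ_q ‖w*_q‖² ≤ 1 and margin θ > 0: ⟨w*_{y_i} − w*_k, x_i⟩ ≥ θ for all k ≠ y_i. Then any ultraconservative additive multiclass algorithm (updating w_r ← w_r + τ_r x on a mistaken example with τ_y = 1, Σ_r τ_r = 0, τ_r ≤ 0 for r in the error set and τ_r = 0 otherwise) makes at most 2/θ² mistakes on the sequence. -/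
/-!
With `W* = (w*_q)` and the current prototypes `W_t`, each mistake raises the correlation
`∑ q, ⟪w*_q, W_t q⟫` by at least `θ`: since `∑ τ_r = 0` and `τ_y = 1`, the increment is
`∑_{r ≠ y} (-τ_r) ⟪w*_y - w*_r, x⟫ ≥ θ`. It raises `∑ q, ‖W_t q‖²` by at most `2`: the cross term
`∑ τ_r ⟪W_t r, x⟫` is `≤ 0` because only classes scoring at least as high as `y` are pushed down,
and `∑ τ_r² ≤ 1 + ∑_{r ≠ y} |τ_r| = 2`. Cauchy–Schwarz then gives `θ T ≤ √(2 T)`.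
-/

open scoped RealInnerProductSpace BigOperators

open Finset

/-- `s r` stands for the score `⟪w r, x⟫`, so the error set is `{r ≠ y | s y ≤ s r}`. -/
structure IsUltraconservative {ι : Type*} [Fintype ι] (s : ι → ℝ) (y : ι) (τ : ι → ℝ) : Prop where
  apply_label : τ y = 1
  sum_eq_zero : ∑ r, τ r = 0
  nonpos : ∀ r ≠ y, τ r ≤ 0
  eq_zero_of_lt : ∀ r ≠ y, s r < s y → τ r = 0

namespace IsUltraconservative

variable {ι : Type*} [Fintype ι] {s : ι → ℝ} {y : ι} {τ : ι → ℝ}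

theorem sum_mul_sub_eq (h : IsUltraconservative s y τ) (a : ι → ℝ) (c : ℝ) :
    ∑ r, τ r * (a r - c) = ∑ r, τ r * a r := by
  simp only [mul_sub, sum_sub_distrib, ← sum_mul, h.sum_eq_zero, zero_mul, sub_zero]

theorem sum_mul_scores_nonpos (h : IsUltraconservative s y τ) : ∑ r, τ r * s r ≤ 0 := by
  rw [← h.sum_mul_sub_eq s (s y)]
  refine sum_nonpos fun r _ => ?_
  rcases eq_or_ne r y with rfl | hr
  · simp
  rcases lt_or_ge (s r) (s y) with hlt | hge
  · simp [h.eq_zero_of_lt r hr hlt]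
  · exact mul_nonpos_of_nonpos_of_nonneg (h.nonpos r hr) (sub_nonneg.mpr hge)

variable [DecidableEq ι]

theorem sum_erase_eq_neg_one (h : IsUltraconservative s y τ) :
    ∑ r ∈ univ.erase y, τ r = -1 := by
  have := h.sum_eq_zero
  rw [← add_sum_erase _ _ (mem_univ y), h.apply_label] at this
  linarith

theorem le_sum_mul_of_margin (h : IsUltraconservative s y τ) {a : ι → ℝ} {θ : ℝ}
    (ha : ∀ r ≠ y, θ ≤ a y - a r) : θ ≤ ∑ r, τ r * a r := by
  have hterm : ∀ r ∈ univ.erase y, -θ * τ r ≤ τ r * (a r - a y) := fun r hr => by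
    have := ha r (ne_of_mem_erase hr)
    nlinarith [h.nonpos r (ne_of_mem_erase hr)]
  calc θ = ∑ r ∈ univ.erase y, -θ * τ r := by rw [← mul_sum, h.sum_erase_eq_neg_one]; ring
    _ ≤ ∑ r ∈ univ.erase y, τ r * (a r - a y) := sum_le_sum hterm
    _ = ∑ r, τ r * (a r - a y) := by
      rw [← add_sum_erase _ _ (mem_univ y), sub_self, mul_zero, zero_add]
    _ = ∑ r, τ r * a r := h.sum_mul_sub_eq a (a y)

theorem sum_sq_le_two (h : IsUltraconservative s y τ) : ∑ r, τ r ^ 2 ≤ 2 := by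
  have hnonneg : ∀ r ∈ univ.erase y, 0 ≤ -τ r := fun r hr =>
    neg_nonneg.mpr (h.nonpos r (ne_of_mem_erase hr))
  have hsum : ∑ r ∈ univ.erase y, -τ r = 1 := by
    rw [sum_neg_distrib, h.sum_erase_eq_neg_one, neg_neg]
  have hsq : ∀ r ∈ univ.erase y, τ r ^ 2 ≤ -τ r := fun r hr => by
    have hle : -τ r ≤ 1 := hsum ▸ single_le_sum hnonneg hr
    nlinarith [hnonneg r hr]
  rw [← add_sum_erase _ _ (mem_univ y), h.apply_label]
  linarith [sum_le_sum hsq]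

end IsUltraconservative

section Update

variable {ι E : Type*} [Fintype ι] [NormedAddCommGroup E] [InnerProductSpace ℝ E]

theorem sum_inner_add_smul (u w : ι → E) (τ : ι → ℝ) (x : E) :
    ∑ q, ⟪u q, w q + τ q • x⟫ = ∑ q, ⟪u q, w q⟫ + ∑ q, τ q * ⟪u q, x⟫ := by
  simp only [inner_add_right, real_inner_smul_right, sum_add_distrib]

theorem sum_norm_add_smul_sq (w : ι → E) (τ : ι → ℝ) (x : E) :
    ∑ q, ‖w q + τ q • x‖ ^ 2
      = ∑ q, ‖w q‖ ^ 2 + 2 * ∑ q, τ q * ⟪w q, x⟫ + (∑ q, τ q ^ 2) * ‖x‖ ^ 2 := by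
  simp only [norm_add_sq_real, real_inner_smul_right, norm_smul, mul_pow, Real.norm_eq_abs,
    sq_abs, sum_add_distrib, mul_sum, sum_mul]

theorem sq_sum_inner_le (u v : ι → E) :
    (∑ q, ⟪u q, v q⟫) ^ 2 ≤ (∑ q, ‖u q‖ ^ 2) * ∑ q, ‖v q‖ ^ 2 := by
  calc (∑ q, ⟪u q, v q⟫) ^ 2 = |∑ q, ⟪u q, v q⟫| ^ 2 := (sq_abs _).symm
    _ ≤ (∑ q, ‖u q‖ * ‖v q‖) ^ 2 :=
      pow_le_pow_left₀ (abs_nonneg _)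
        ((abs_sum_le_sum_abs _ _).trans (sum_le_sum fun q _ => abs_real_inner_le_norm _ _)) 2
    _ ≤ (∑ q, ‖u q‖ ^ 2) * ∑ q, ‖v q‖ ^ 2 := sum_mul_sq_le_sq_mul_sq _ _ _

variable [DecidableEq ι] {w : ι → E} {x : E} {y : ι} {τ : ι → ℝ}

theorem IsUltraconservative.sum_inner_add_smul_ge
    (h : IsUltraconservative (fun r => ⟪w r, x⟫) y τ) {u : ι → E} {θ : ℝ}
    (hmargin : ∀ r ≠ y, θ ≤ ⟪u y - u r, x⟫) :
    ∑ q, ⟪u q, w q⟫ + θ ≤ ∑ q, ⟪u q, w q + τ q • x⟫ := by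
  rw [sum_inner_add_smul]
  gcongr
  exact h.le_sum_mul_of_margin fun r hr => by simpa [inner_sub_left] using hmargin r hr

theorem IsUltraconservative.sum_norm_add_smul_sq_le
    (h : IsUltraconservative (fun r => ⟪w r, x⟫) y τ) (hx : ‖x‖ ≤ 1) :
    ∑ q, ‖w q + τ q • x‖ ^ 2 ≤ ∑ q, ‖w q‖ ^ 2 + 2 := by
  have hx2 : ‖x‖ ^ 2 ≤ 1 := pow_le_one₀ (norm_nonneg x) hx
  have hτ2 : ∑ q, τ q ^ 2 ≤ 2 := h.sum_sq_le_two
  have hτ2' : 0 ≤ ∑ q, τ q ^ 2 := sum_nonneg fun q _ => sq_nonneg _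
  rw [sum_norm_add_smul_sq]
  nlinarith [h.sum_mul_scores_nonpos, sq_nonneg ‖x‖]

end Update

theorem add_mul_le_of_forall_lt_add_le {f : ℕ → ℝ} {c : ℝ} {n : ℕ}
    (h : ∀ i < n, f i + c ≤ f (i + 1)) : f 0 + n * c ≤ f n := by
  induction n with
  | zero => simp
  | succ k ih =>
    have := h k k.lt_succ_self
    have := ih fun i hi => h i (hi.trans k.lt_succ_self)
    push_cast
    linarith

theorem stmt4_general
    {d Q : ℕ} (T : ℕ) (θ : ℝ) (hθ : 0 < θ)
    (x : ℕ → EuclideanSpace ℝ (Fin d)) (y : ℕ → Fin Q)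
    (hx : ∀ i, ‖x i‖ ≤ 1)
    (wstar : Fin Q → EuclideanSpace ℝ (Fin d))
    (hwstar : ∑ q : Fin Q, ‖wstar q‖ ^ 2 ≤ 1)
    (hmargin : ∀ i, i < T → ∀ k, k ≠ y i → ⟪wstar (y i) - wstar k, x i⟫ ≥ θ)
    (W : ℕ → Fin Q → EuclideanSpace ℝ (Fin d))
    (hW0 : ∀ r, W 0 r = 0)
    (τ : ℕ → Fin Q → ℝ)
    -- ultraconservative update steps
    (hτy : ∀ i, i < T → τ i (y i) = 1)
    (hτsum : ∀ i, i < T → ∑ r : Fin Q, τ i r = 0)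
    (hτE : ∀ i, i < T → ∀ r, r ≠ y i → ⟪W i r, x i⟫ ≥ ⟪W i (y i), x i⟫ → τ i r ≤ 0)
    (hτ0 : ∀ i, i < T → ∀ r, r ≠ y i → ¬ (⟪W i r, x i⟫ ≥ ⟪W i (y i), x i⟫) → τ i r = 0)
    (hupd : ∀ i, i < T → ∀ r, W (i + 1) r = W i r + τ i r • x i) :
    (T : ℝ) ≤ 2 / θ ^ 2 := by
  have hstep : ∀ i < T, IsUltraconservative (fun r => ⟪W i r, x i⟫) (y i) (τ i) := fun i hi =>
    { apply_label := hτy i hi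
      sum_eq_zero := hτsum i hi
      nonpos := fun r hr => (le_or_gt ⟪W i (y i), x i⟫ ⟪W i r, x i⟫).elim
        (hτE i hi r hr) fun hlt => (hτ0 i hi r hr (not_le.mpr hlt)).le
      eq_zero_of_lt := fun r hr hlt => hτ0 i hi r hr (not_le.mpr hlt) }
  have hcorr : T * θ ≤ ∑ q, ⟪wstar q, W T q⟫ := by
    simpa [hW0] using add_mul_le_of_forall_lt_add_le (f := fun i => ∑ q, ⟪wstar q, W i q⟫) (c := θ)
      fun i hi => by simpa only [hupd i hi] using (hstep i hi).sum_inner_add_smul_ge (hmargin i hi)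
  have hnorm : ∑ q, ‖W T q‖ ^ 2 ≤ 2 * T := by
    have := add_mul_le_of_forall_lt_add_le (f := fun i => -∑ q, ‖W i q‖ ^ 2) (c := -2)
      fun i hi => by
        simp only [hupd i hi]; linarith [(hstep i hi).sum_norm_add_smul_sq_le (hx i)]
    simp [hW0] at this
    linarith
  have hsq : (T * θ) ^ 2 ≤ 2 * T := by
    calc (T * θ) ^ 2 ≤ (∑ q, ⟪wstar q, W T q⟫) ^ 2 := by gcongr
      _ ≤ (∑ q, ‖wstar q‖ ^ 2) * ∑ q, ‖W T q‖ ^ 2 := sq_sum_inner_le _ _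
      _ ≤ 2 * T := by nlinarith [sum_nonneg fun q (_ : q ∈ univ) => sq_nonneg ‖W T q‖]
  rcases (Nat.cast_nonneg (α := ℝ) T).eq_or_lt with hT | hT
  · rw [← hT]; positivity
  rw [le_div_iff₀ (by positivity)]
  nlinarith

theorem stmt4
    {d Q : ℕ} (T : ℕ) (θ : ℝ) (hθ : 0 < θ)
    (x : ℕ → EuclideanSpace ℝ (Fin d)) (y : ℕ → Fin Q)
    (hx : ∀ i, ‖x i‖ ≤ 1)
    (wstar : Fin Q → EuclideanSpace ℝ (Fin d))
    (hwstar : ∑ q : Fin Q, ‖wstar q‖ ^ 2 ≤ 1)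
    (hmargin : ∀ i, i < T → ∀ k, k ≠ y i → ⟪wstar (y i) - wstar k, x i⟫ ≥ θ)
    (W : ℕ → Fin Q → EuclideanSpace ℝ (Fin d))
    (hW0 : ∀ r, W 0 r = 0)
    (τ : ℕ → Fin Q → ℝ)
    -- each step i < T processes a mistaken example
    (hmistake : ∀ i, i < T → ∃ r, r ≠ y i ∧ ⟪W i r, x i⟫ ≥ ⟪W i (y i), x i⟫)
    -- ultraconservative update steps
    (hτy : ∀ i, i < T → τ i (y i) = 1)
    (hτsum : ∀ i, i < T → ∑ r : Fin Q, τ i r = 0)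
    (hτE : ∀ i, i < T → ∀ r, r ≠ y i → ⟪W i r, x i⟫ ≥ ⟪W i (y i), x i⟫ → τ i r ≤ 0)
    (hτ0 : ∀ i, i < T → ∀ r, r ≠ y i → ¬ (⟪W i r, x i⟫ ≥ ⟪W i (y i), x i⟫) → τ i r = 0)
    (hupd : ∀ i, i < T → ∀ r, W (i + 1) r = W i r + τ i r • x i) :
    (T : ℝ) ≤ 2 / θ ^ 2 :=
  stmt4_general T θ hθ x y hx wstar hwstar hmargin W hW0 τ hτy hτsum hτE hτ0 hupd
end

section
/- (Mistake bound with approximate margin) Under the setting of the multiclass Perceptron, if each update vector z satisfies ‖z‖ ≤ 1, ⟨w*_{q(z)} − w*_k, z⟩ ≥ θ − ε for all k ≠ q(z) with 0 < ε < θ, and the update is ultraconservative with respect to q(z), then the number of updates is at most 2/(θ − ε)². -/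
/-!
Kesler's construction: regard the class weights as one vector of the product space, with inner
product `∑ r, ⟪u r, v r⟫`. An ultraconservative update raises the correlation `∑ r, ⟪w* r, W r⟫`
by at least the margin `θ - ε`, because off the label `-τ` is a probability vector. It raises
`∑ r, ‖W r‖ ^ 2` by at most `(∑ r, τ r ^ 2) ‖z‖ ^ 2 ≤ 2`, the cross term being nonpositive since
only classes scoring at least as high as the label are demoted. After `T` updates Cauchy–Schwarz
gives `(T (θ - ε)) ^ 2 ≤ 2 T`.
-/

open scoped RealInnerProductSpace

open Finset

section CoefficientSums

variable {ι : Type*} [Fintype ι] {τ : ι → ℝ} {y : ι}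

theorem sum_mul_eq_sum_mul_sub_of_sum_eq_zero (hsum : ∑ r, τ r = 0) (a : ι → ℝ) (y : ι) :
    ∑ r, τ r * a r = ∑ r, τ r * (a r - a y) := by
  simp only [mul_sub, sum_sub_distrib, ← sum_mul, hsum, zero_mul, sub_zero]

theorem sum_erase_neg_eq_one [DecidableEq ι] (hy : τ y = 1) (hsum : ∑ r, τ r = 0) :
    ∑ r ∈ univ.erase y, -τ r = 1 := by
  have := add_sum_erase univ τ (mem_univ y)
  rw [sum_neg_distrib]
  linarith

theorem sum_sq_le_two (hy : τ y = 1) (hsum : ∑ r, τ r = 0) (hnonpos : ∀ r, r ≠ y → τ r ≤ 0) :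
    ∑ r, τ r ^ 2 ≤ 2 := by
  classical
  have hrest : ∑ r ∈ univ.erase y, (-τ r) ^ 2 ≤ 1 := by
    calc ∑ r ∈ univ.erase y, (-τ r) ^ 2
        ≤ (∑ r ∈ univ.erase y, -τ r) ^ 2 :=
          sum_sq_le_sq_sum_of_nonneg fun r hr => neg_nonneg.2 (hnonpos r (ne_of_mem_erase hr))
      _ = 1 := by rw [sum_erase_neg_eq_one hy hsum, one_pow]
  simp only [neg_sq] at hrest
  rw [← add_sum_erase univ _ (mem_univ y), hy]
  linarith

end CoefficientSums

section Ultraconservative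

variable {V : Type*} [NormedAddCommGroup V] [InnerProductSpace ℝ V] {ι : Type*} [Fintype ι]

theorem sq_sum_inner_le_mul_sum_norm_sq (u v : ι → V) :
    (∑ r, ⟪u r, v r⟫) ^ 2 ≤ (∑ r, ‖u r‖ ^ 2) * ∑ r, ‖v r‖ ^ 2 := by
  have hinner : ∀ a b : PiLp 2 (fun _ : ι => V), ⟪a, b⟫ = ∑ r, ⟪a r, b r⟫ :=
    fun a b => PiLp.inner_apply a b
  have hCS := real_inner_mul_inner_self_le (WithLp.toLp 2 u) (WithLp.toLp 2 v)
  simp only [hinner, real_inner_self_eq_norm_sq] at hCS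
  rw [sq]
  exact hCS

structure IsUltraconservative_s5 (W : ι → V) (z : V) (y : ι) (τ : ι → ℝ) : Prop where
  label_eq_one : τ y = 1
  sum_eq_zero : ∑ r, τ r = 0
  nonpos_of_score_ge : ∀ r, r ≠ y → ⟪W r, z⟫ ≥ ⟪W y, z⟫ → τ r ≤ 0
  eq_zero_of_not_score_ge : ∀ r, r ≠ y → ¬ ⟪W r, z⟫ ≥ ⟪W y, z⟫ → τ r = 0

namespace IsUltraconservative_s5

variable {W : ι → V} {z : V} {y : ι} {τ : ι → ℝ}

theorem nonpos (h : IsUltraconservative_s5 W z y τ) (r : ι) (hr : r ≠ y) : τ r ≤ 0 := by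
  by_cases hscore : ⟪W r, z⟫ ≥ ⟪W y, z⟫
  · exact h.nonpos_of_score_ge r hr hscore
  · exact (h.eq_zero_of_not_score_ge r hr hscore).le

theorem sum_mul_inner_nonpos (h : IsUltraconservative_s5 W z y τ) :
    ∑ r, τ r * ⟪W r, z⟫ ≤ 0 := by
  rw [sum_mul_eq_sum_mul_sub_of_sum_eq_zero h.sum_eq_zero _ y]
  refine sum_nonpos fun r _ => ?_
  by_cases hry : r = y
  · simp [hry]
  by_cases hscore : ⟪W r, z⟫ ≥ ⟪W y, z⟫
  · exact mul_nonpos_of_nonpos_of_nonneg (h.nonpos_of_score_ge r hry hscore) (sub_nonneg.2 hscore)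
  · simp [h.eq_zero_of_not_score_ge r hry hscore]

theorem le_sum_mul_inner (h : IsUltraconservative_s5 W z y τ) {u : ι → V} {γ : ℝ}
    (hmargin : ∀ k, k ≠ y → ⟪u y - u k, z⟫ ≥ γ) :
    γ ≤ ∑ r, τ r * ⟪u r, z⟫ := by
  classical
  rw [sum_mul_eq_sum_mul_sub_of_sum_eq_zero h.sum_eq_zero _ y,
    ← sum_erase univ (by rw [sub_self, mul_zero])]
  calc γ = ∑ r ∈ univ.erase y, -τ r * γ := by
        rw [← sum_mul, sum_erase_neg_eq_one h.label_eq_one h.sum_eq_zero, one_mul]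
    _ ≤ ∑ r ∈ univ.erase y, τ r * (⟪u r, z⟫ - ⟪u y, z⟫) := by
        refine sum_le_sum fun r hr => ?_
        have hry := ne_of_mem_erase hr
        have hm := hmargin r hry
        rw [inner_sub_left] at hm
        nlinarith [h.nonpos r hry]

theorem sum_inner_add_le (h : IsUltraconservative_s5 W z y τ) {u : ι → V} {γ : ℝ}
    (hmargin : ∀ k, k ≠ y → ⟪u y - u k, z⟫ ≥ γ) :
    ∑ r, ⟪u r, W r⟫ + γ ≤ ∑ r, ⟪u r, W r + τ r • z⟫ := by
  simp only [inner_add_right, real_inner_smul_right, sum_add_distrib]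
  linarith [h.le_sum_mul_inner hmargin]

theorem sum_norm_sq_add_le (h : IsUltraconservative_s5 W z y τ) :
    ∑ r, ‖W r + τ r • z‖ ^ 2 ≤ ∑ r, ‖W r‖ ^ 2 + 2 * ‖z‖ ^ 2 := by
  have hexpand : ∑ r, ‖W r + τ r • z‖ ^ 2
      = ∑ r, ‖W r‖ ^ 2 + 2 * ∑ r, τ r * ⟪W r, z⟫ + (∑ r, τ r ^ 2) * ‖z‖ ^ 2 := by
    simp only [norm_add_sq_real, real_inner_smul_right, norm_smul, mul_pow, Real.norm_eq_abs,
      sq_abs, sum_add_distrib, mul_sum, sum_mul]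
  have hsq := sum_sq_le_two h.label_eq_one h.sum_eq_zero h.nonpos
  rw [hexpand]
  nlinarith [h.sum_mul_inner_nonpos, sq_nonneg ‖z‖]

end IsUltraconservative_s5

end Ultraconservative

theorem add_nat_mul_le_of_forall_lt {f : ℕ → ℝ} {c : ℝ} {T : ℕ}
    (hstep : ∀ i, i < T → f i + c ≤ f (i + 1)) (n : ℕ) (hn : n ≤ T) : f 0 + n * c ≤ f n := by
  induction n with
  | zero => simp
  | succ m ih =>
    have := hstep m hn
    push_cast
    linarith [ih (Nat.le_of_succ_le hn)]

theorem stmt5_general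
    {d Q : ℕ} (T : ℕ) (θ ε : ℝ) (hεθ : ε < θ)
    (z : ℕ → EuclideanSpace ℝ (Fin d)) (q : ℕ → Fin Q)
    (hz : ∀ i, ‖z i‖ ≤ 1)
    (wstar : Fin Q → EuclideanSpace ℝ (Fin d))
    (hwstar : ∑ r : Fin Q, ‖wstar r‖ ^ 2 ≤ 1)
    (hmargin : ∀ i, i < T → ∀ k, k ≠ q i → ⟪wstar (q i) - wstar k, z i⟫ ≥ θ - ε)
    (W : ℕ → Fin Q → EuclideanSpace ℝ (Fin d))
    (hW0 : ∀ r, W 0 r = 0)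
    (τ : ℕ → Fin Q → ℝ)
    (hτy : ∀ i, i < T → τ i (q i) = 1)
    (hτsum : ∀ i, i < T → ∑ r : Fin Q, τ i r = 0)
    (hτE : ∀ i, i < T → ∀ r, r ≠ q i → ⟪W i r, z i⟫ ≥ ⟪W i (q i), z i⟫ → τ i r ≤ 0)
    (hτ0 : ∀ i, i < T → ∀ r, r ≠ q i → ¬ (⟪W i r, z i⟫ ≥ ⟪W i (q i), z i⟫) → τ i r = 0)
    (hupd : ∀ i, i < T → ∀ r, W (i + 1) r = W i r + τ i r • z i) :
    (T : ℝ) ≤ 2 / (θ - ε) ^ 2 := by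
  have hτ : ∀ i, i < T → IsUltraconservative_s5 (W i) (z i) (q i) (τ i) :=
    fun i hi => ⟨hτy i hi, hτsum i hi, hτE i hi, hτ0 i hi⟩
  have hprogress : (T : ℝ) * (θ - ε) ≤ ∑ r, ⟪wstar r, W T r⟫ := by
    have := add_nat_mul_le_of_forall_lt (f := fun n => ∑ r, ⟪wstar r, W n r⟫)
      (fun i hi => by simpa only [hupd i hi] using (hτ i hi).sum_inner_add_le (hmargin i hi))
      T le_rfl
    simpa [hW0] using this
  have hgrowth : ∑ r, ‖W T r‖ ^ 2 ≤ 2 * T := by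
    have := add_nat_mul_le_of_forall_lt (f := fun n => -∑ r, ‖W n r‖ ^ 2) (c := -2)
      (fun i hi => by
        simp only [hupd i hi]
        linarith [(hτ i hi).sum_norm_sq_add_le, pow_le_one₀ (n := 2) (norm_nonneg _) (hz i)])
      T le_rfl
    have hW0norm : ∑ r, ‖W 0 r‖ ^ 2 = 0 := by simp [hW0]
    linarith
  have hγ : 0 < θ - ε := sub_pos.2 hεθ
  have hsq : ((T : ℝ) * (θ - ε)) ^ 2 ≤ 2 * T :=
    calc ((T : ℝ) * (θ - ε)) ^ 2 ≤ (∑ r, ⟪wstar r, W T r⟫) ^ 2 :=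
          pow_le_pow_left₀ (by positivity) hprogress 2
      _ ≤ (∑ r, ‖wstar r‖ ^ 2) * ∑ r, ‖W T r‖ ^ 2 := sq_sum_inner_le_mul_sum_norm_sq wstar (W T)
      _ ≤ 1 * (2 * T) := mul_le_mul hwstar hgrowth (by positivity) zero_le_one
      _ = 2 * T := one_mul _
  rw [le_div_iff₀ (by positivity)]
  nlinarith [Nat.cast_nonneg (α := ℝ) T]

theorem stmt5
    {d Q : ℕ} (T : ℕ) (θ ε : ℝ) (hε : 0 < ε) (hεθ : ε < θ)
    (z : ℕ → EuclideanSpace ℝ (Fin d)) (q : ℕ → Fin Q)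
    (hz : ∀ i, ‖z i‖ ≤ 1)
    (wstar : Fin Q → EuclideanSpace ℝ (Fin d))
    (hwstar : ∑ r : Fin Q, ‖wstar r‖ ^ 2 ≤ 1)
    (hmargin : ∀ i, i < T → ∀ k, k ≠ q i → ⟪wstar (q i) - wstar k, z i⟫ ≥ θ - ε)
    (W : ℕ → Fin Q → EuclideanSpace ℝ (Fin d))
    (hW0 : ∀ r, W 0 r = 0)
    (τ : ℕ → Fin Q → ℝ)
    (hmistake : ∀ i, i < T → ∃ r, r ≠ q i ∧ ⟪W i r, z i⟫ ≥ ⟪W i (q i), z i⟫)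
    (hτy : ∀ i, i < T → τ i (q i) = 1)
    (hτsum : ∀ i, i < T → ∑ r : Fin Q, τ i r = 0)
    (hτE : ∀ i, i < T → ∀ r, r ≠ q i → ⟪W i r, z i⟫ ≥ ⟪W i (q i), z i⟫ → τ i r ≤ 0)
    (hτ0 : ∀ i, i < T → ∀ r, r ≠ q i → ¬ (⟪W i r, z i⟫ ≥ ⟪W i (q i), z i⟫) → τ i r = 0)
    (hupd : ∀ i, i < T → ∀ r, W (i + 1) r = W i r + τ i r • z i) :
    (T : ℝ) ≤ 2 / (θ - ε) ^ 2 :=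
  stmt5_general T θ ε hεθ z q hz wstar hwstar hmargin W hW0 τ hτy hτsum hτE hτ0 hupd
end

section
/- For a fixed function g bounded in [0,2], and random signs applied to swap corresponding elements of two fixed m-samples T, T' (uniform over all 2^m swap patterns), the probability that |err_{σ(T)}[g] − err_{σ(T')}[g]| ≥ ε/4 is at most 2·exp(−mε²/128). -/
open scoped BigOperators

open Finset in
private lemma onesided_bound (m : ℕ) (a : Fin m → ℝ) (ha : ∀ i, |a i| ≤ 2)
    (ε : ℝ) (hε : 0 < ε) :
    ((univ.filter (fun σ : Fin m → Bool =>
        (m : ℝ) * ε / 4 ≤ ∑ i, (if σ i then a i else -a i))).card : ℝ)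
      ≤ Real.exp (-(m * ε ^ 2) / 128) * 2 ^ m := by
  classical
  set t : ℝ := ε / 16 with ht
  have htpos : 0 < t := by positivity
  set c : ℝ := (m : ℝ) * ε / 4 with hc
  set S : (Fin m → Bool) → ℝ := fun σ => ∑ i, (if σ i then a i else -a i) with hS
  -- Chernoff step
  have step1 : ((univ.filter (fun σ : Fin m → Bool => c ≤ S σ)).card : ℝ)
      ≤ ∑ σ : Fin m → Bool, Real.exp (t * (S σ - c)) := by
    rw [card_eq_sum_ones, Nat.cast_sum]
    refine le_trans (Finset.sum_le_sum (fun σ hσ => ?_))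
      (Finset.sum_le_sum_of_subset_of_nonneg (filter_subset _ _)
        (fun _ _ _ => (Real.exp_pos _).le))
    simp only [Nat.cast_one]
    apply Real.one_le_exp
    have := (mem_filter.mp hσ).2
    nlinarith
  -- MGF computation
  have step2 : ∀ σ : Fin m → Bool, Real.exp (t * S σ)
      = ∏ i, Real.exp (t * (if σ i then a i else -a i)) := by
    intro σ
    rw [hS, Finset.mul_sum, Real.exp_sum]
  have step3 : ∑ σ : Fin m → Bool, Real.exp (t * S σ)
      = ∏ i, (Real.exp (t * a i) + Real.exp (t * -a i)) := by
    simp_rw [step2]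
    have := Finset.prod_univ_sum (fun _ : Fin m => (univ : Finset Bool))
      (fun i b => Real.exp (t * (if b then a i else -a i)))
    rw [Fintype.piFinset_univ] at this
    rw [← this]
    congr 1
    funext i
    simp [Fintype.sum_bool]
  have factor_bound : ∀ i : Fin m,
      Real.exp (t * a i) + Real.exp (t * -a i) ≤ 2 * Real.exp (2 * t ^ 2) := by
    intro i
    have h1 : Real.exp (t * a i) + Real.exp (t * -a i) = 2 * Real.cosh (t * a i) := by
      rw [Real.cosh_eq]; ring_nf
    rw [h1]
    have h2 : Real.cosh (t * a i) ≤ Real.exp ((t * a i) ^ 2 / 2) :=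
      Real.cosh_le_exp_half_sq _
    have h3 : (t * a i) ^ 2 / 2 ≤ 2 * t ^ 2 := by
      have : a i ^ 2 ≤ 4 := by nlinarith [ha i, abs_nonneg (a i), sq_abs (a i)]
      nlinarith [sq_nonneg t]
    have := Real.exp_le_exp.mpr h3
    linarith [h2.trans this]
  have step4 : ∏ i : Fin m, (Real.exp (t * a i) + Real.exp (t * -a i))
      ≤ 2 ^ m * Real.exp (2 * m * t ^ 2) := by
    calc ∏ i : Fin m, (Real.exp (t * a i) + Real.exp (t * -a i))
        ≤ ∏ _i : Fin m, (2 * Real.exp (2 * t ^ 2)) :=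
          Finset.prod_le_prod (fun i _ => by positivity) (fun i _ => factor_bound i)
      _ = (2 * Real.exp (2 * t ^ 2)) ^ m := by simp
      _ = 2 ^ m * Real.exp (2 * t ^ 2) ^ m := by rw [mul_pow]
      _ = 2 ^ m * Real.exp (2 * m * t ^ 2) := by
          rw [← Real.exp_nat_mul]; ring_nf
  -- combine
  have step5 : ∑ σ : Fin m → Bool, Real.exp (t * (S σ - c))
      = Real.exp (-(t * c)) * ∑ σ : Fin m → Bool, Real.exp (t * S σ) := by
    rw [Finset.mul_sum]
    congr 1; funext σ
    rw [← Real.exp_add]; ring_nf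
  have final : ((univ.filter (fun σ : Fin m → Bool => c ≤ S σ)).card : ℝ)
      ≤ Real.exp (-(t * c)) * (2 ^ m * Real.exp (2 * m * t ^ 2)) := by
    refine step1.trans ?_
    rw [step5, step3]
    exact mul_le_mul_of_nonneg_left step4 (Real.exp_pos _).le
  refine final.trans (le_of_eq ?_)
  rw [← mul_assoc, mul_comm (Real.exp (-(t * c))) ((2:ℝ) ^ m), mul_assoc,
    ← Real.exp_add, mul_comm]
  congr 2
  rw [ht, hc]; ring

open Classical in
theorem stmt10
    {Z : Type*} (m : ℕ) (hm : 0 < m)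
    (z z' : Fin m → Z) (g : Z → ℝ)
    (hbdd : ∀ zz : Z, g zz ∈ Set.Icc (0 : ℝ) 2)
    (ε : ℝ) (hε : 0 < ε) :
    ((Finset.univ.filter (fun σ : Fin m → Bool =>
        ε / 4 ≤ |(m : ℝ)⁻¹ * ∑ i : Fin m, (if σ i then g (z' i) else g (z i))
          - (m : ℝ)⁻¹ * ∑ i : Fin m, (if σ i then g (z i) else g (z' i))|)).card : ℝ)
        / 2 ^ m
      ≤ 2 * Real.exp (-(m * ε ^ 2) / 128) := by
  classical
  set a : Fin m → ℝ := fun i => g (z' i) - g (z i) with hadef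
  have ha : ∀ i, |a i| ≤ 2 := by
    intro i
    have h1 := hbdd (z i); have h2 := hbdd (z' i)
    simp only [Set.mem_Icc] at h1 h2
    rw [abs_le, hadef]; constructor <;> simp <;> linarith
  set S : (Fin m → Bool) → ℝ := fun σ => ∑ i, (if σ i then a i else -a i) with hS
  have hmpos : (0 : ℝ) < m := Nat.cast_pos.mpr hm
  set c : ℝ := (m : ℝ) * ε / 4 with hc
  -- rewrite the event
  have hevent : ∀ σ : Fin m → Bool,
      (ε / 4 ≤ |(m : ℝ)⁻¹ * ∑ i : Fin m, (if σ i then g (z' i) else g (z i))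
          - (m : ℝ)⁻¹ * ∑ i : Fin m, (if σ i then g (z i) else g (z' i))|)
      ↔ c ≤ |S σ| := by
    intro σ
    have hdiff : (m : ℝ)⁻¹ * ∑ i : Fin m, (if σ i then g (z' i) else g (z i))
          - (m : ℝ)⁻¹ * ∑ i : Fin m, (if σ i then g (z i) else g (z' i))
        = (m : ℝ)⁻¹ * S σ := by
      rw [← mul_sub, hS]
      simp only
      rw [← Finset.sum_sub_distrib]
      refine congrArg _ (Finset.sum_congr rfl fun i _ => ?_)
      by_cases h : σ i <;> simp [h, hadef]
    rw [hdiff, abs_mul, abs_of_pos (inv_pos.mpr hmpos), hc]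
    constructor <;> intro h
    · rw [inv_mul_eq_div, le_div_iff₀ hmpos] at h; nlinarith
    · rw [inv_mul_eq_div, le_div_iff₀ hmpos]; nlinarith
  have hsubset : Finset.univ.filter (fun σ : Fin m → Bool => c ≤ |S σ|)
      ⊆ (Finset.univ.filter (fun σ : Fin m → Bool => c ≤ S σ))
        ∪ (Finset.univ.filter (fun σ : Fin m → Bool => c ≤ -S σ)) := by
    intro σ hσ
    have h := (Finset.mem_filter.mp hσ).2
    rcases abs_cases (S σ) with ⟨heq, _⟩ | ⟨heq, _⟩
    · exact Finset.mem_union_left _ (Finset.mem_filter.mpr ⟨Finset.mem_univ _, heq ▸ h⟩)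
    · exact Finset.mem_union_right _ (Finset.mem_filter.mpr ⟨Finset.mem_univ _, heq ▸ h⟩)
  have hone := onesided_bound m a ha ε hε
  have hone' := onesided_bound m (fun i => -a i) (fun i => by
    rw [abs_neg]; exact ha i) ε hε
  have hneg : ∀ σ : Fin m → Bool,
      (∑ i, (if σ i then -a i else -(-a i))) = -S σ := by
    intro σ
    rw [hS, ← Finset.sum_neg_distrib]
    congr 1; funext i
    by_cases h : σ i <;> simp [h]
  simp only [hneg] at hone'
  have hcard : ((Finset.univ.filter (fun σ : Fin m → Bool => c ≤ |S σ|)).card : ℝ)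
      ≤ 2 * Real.exp (-(m * ε ^ 2) / 128) * 2 ^ m := by
    calc ((Finset.univ.filter (fun σ : Fin m → Bool => c ≤ |S σ|)).card : ℝ)
        ≤ (((Finset.univ.filter (fun σ : Fin m → Bool => c ≤ S σ))
            ∪ (Finset.univ.filter (fun σ : Fin m → Bool => c ≤ -S σ))).card : ℝ) := by
          exact_mod_cast Finset.card_le_card hsubset
      _ ≤ ((Finset.univ.filter (fun σ : Fin m → Bool => c ≤ S σ)).card : ℝ)
          + ((Finset.univ.filter (fun σ : Fin m → Bool => c ≤ -S σ)).card : ℝ) := by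
          exact_mod_cast Finset.card_union_le _ _
      _ ≤ Real.exp (-(m * ε ^ 2) / 128) * 2 ^ m
          + Real.exp (-(m * ε ^ 2) / 128) * 2 ^ m := add_le_add hone hone'
      _ = 2 * Real.exp (-(m * ε ^ 2) / 128) * 2 ^ m := by ring
  have hfilter_eq : Finset.univ.filter (fun σ : Fin m → Bool =>
        ε / 4 ≤ |(m : ℝ)⁻¹ * ∑ i : Fin m, (if σ i then g (z' i) else g (z i))
          - (m : ℝ)⁻¹ * ∑ i : Fin m, (if σ i then g (z i) else g (z' i))|)
      = Finset.univ.filter (fun σ : Fin m → Bool => c ≤ |S σ|) := by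
    apply Finset.filter_congr
    intro σ _
    simp only [hevent σ]
  rw [hfilter_eq, div_le_iff₀ (by positivity : (0:ℝ) < 2 ^ m)]
  exact hcard
end
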